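/- Let W be a row of positive weights and O an order ideal such that the degree form ideal DF_W(I) of a zero-dimensional ideal I has an O-border basis. Then I itself has an O-border basis G = {g_1,…,g_ν}, and moreover b_j ∈ Supp(DF_W(g_j)) for each j. -/

import Mathlib

/-!
If `f ∈ I ∩ ⟨O⟩` were nonzero, its degree form would be a nonzero element of `DF_W(I) ∩ ⟨O⟩`,
so `I ∩ ⟨O⟩ = 0`. Conversely, the degree-`d` part of `DF_W(I)` consists of degree forms of
elements of `I` of degree `d`, so the top component of any `f` is `DF_W(h) + v` with `h ∈ I` and
`v ∈ ⟨O⟩`; subtracting `h + v` lowers the degree, and induction gives `P = I + ⟨O⟩`. Splitting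
`b = g_b + v_b` along `P = I ⊕ ⟨O⟩` yields the border basis, and `b ∈ Supp(DF_W(g_b))` because
`Supp(g_b) ⊆ O ∪ {b}` while `DF_W(g_b) ∉ ⟨O⟩`.
-/

open MvPolynomial Finsupp

open scoped Classical in
/-- The border of a finite set of monomials (represented as exponent vectors). -/
noncomputable def borderSet (n : ℕ) (O : Finset (Fin n →₀ ℕ)) : Finset (Fin n →₀ ℕ) :=
  (O.biUnion (fun t => Finset.image (fun k => t + Finsupp.single k 1) Finset.univ)) \ O

/-- The `W`-degree of a monomial with respect to the weights `w`. -/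
def degW (n : ℕ) (w : Fin n → ℕ) (m : Fin n →₀ ℕ) : ℕ := ∑ i, w i * m i

/-- `g` is an `O`-border basis of `I`: each `g b` (for `b` in the border) lies in `I` and has
the prebasis shape `b - Σ c_i t_i`, and `P = I ⊕ ⟨O⟩_K` as `K`-vector spaces. -/
def IsBorderBasis (K : Type*) [Field K] (n : ℕ) (O : Finset (Fin n →₀ ℕ))
    (I : Ideal (MvPolynomial (Fin n) K)) (g : (Fin n →₀ ℕ) → MvPolynomial (Fin n) K) : Prop :=
  (∀ b ∈ borderSet n O, g b ∈ I ∧ ∃ c : (Fin n →₀ ℕ) → K,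
      g b = monomial b 1 - ∑ t ∈ O, MvPolynomial.C (c t) * monomial t 1) ∧
  IsCompl (Submodule.restrictScalars K I)
    (Submodule.span K {p : MvPolynomial (Fin n) K | ∃ t ∈ O, p = monomial t 1})

/-- The degree form `DF_W(f)`: the homogeneous component of `f` of maximal `W`-degree. -/
noncomputable def DF (K : Type*) [Field K] (n : ℕ) (w : Fin n → ℕ)
    (f : MvPolynomial (Fin n) K) : MvPolynomial (Fin n) K :=
  ∑ m ∈ f.support.filter (fun m => degW n w m = f.support.sup (degW n w)),
    monomial m (coeff m f)

/-- The degree form ideal `DF_W(I)`, generated by the degree forms of nonzero elements of `I`. -/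
noncomputable def DFideal (K : Type*) [Field K] (n : ℕ) (w : Fin n → ℕ)
    (I : Ideal (MvPolynomial (Fin n) K)) : Ideal (MvPolynomial (Fin n) K) :=
  Ideal.span {p | ∃ f ∈ I, f ≠ 0 ∧ p = DF K n w f}

section WeightedComponents

variable {σ R : Type*} [CommSemiring R] {w : σ → ℕ}

theorem weightedHomogeneousComponent_monomial_mul (d : ℕ) (m : σ →₀ ℕ) (c : R)
    (p : MvPolynomial σ R) :
    weightedHomogeneousComponent w d (monomial m c * p) =
      if weight w m ≤ d then monomial m c * weightedHomogeneousComponent w (d - weight w m) p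
      else 0 := by
  classical
  ext k
  by_cases hmk : m ≤ k
  · have hk : weight w k = weight w (k - m) + weight w m := by
      rw [← map_add, tsub_add_cancel_of_le hmk]
    rw [coeff_weightedHomogeneousComponent, coeff_monomial_mul', if_pos hmk]
    split_ifs with hd hm hm
    · rw [coeff_monomial_mul', if_pos hmk, coeff_weightedHomogeneousComponent, if_pos (by omega)]
    · omega
    · rw [coeff_monomial_mul', if_pos hmk, coeff_weightedHomogeneousComponent, if_neg (by omega),
        mul_zero]
    · rw [coeff_zero]
  · split_ifs <;> simp [coeff_weightedHomogeneousComponent, coeff_monomial_mul', hmk]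

theorem mem_restrictSupport_lt_of_weightedHomogeneousComponent_eq_zero {d : ℕ}
    {p : MvPolynomial σ R} (hp : p ∈ restrictSupport R {m | weight w m ≤ d})
    (hd : weightedHomogeneousComponent w d p = 0) :
    p ∈ restrictSupport R {m | weight w m < d} := by
  intro m hm
  refine lt_of_le_of_ne (show weight w m ≤ d from hp hm) fun hmd => ?_
  have := congr_arg (coeff m) hd
  rw [coeff_weightedHomogeneousComponent, if_pos hmd, coeff_zero] at this
  exact (MvPolynomial.mem_support_iff.1 hm) this

theorem support_weightedHomogeneousComponent_subset (d : ℕ) (p : MvPolynomial σ R) :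
    (weightedHomogeneousComponent w d p).support ⊆ p.support := by
  classical
  rw [support_weightedHomogeneousComponent]
  exact Finset.filter_subset _ _

theorem weightedHomogeneousComponent_weightedTotalDegree_ne_zero {p : MvPolynomial σ R}
    (hp : p ≠ 0) : weightedHomogeneousComponent w (weightedTotalDegree w p) p ≠ 0 := by
  obtain ⟨m, hm, hmax⟩ := Finset.exists_mem_eq_sup p.support (support_nonempty.2 hp) (weight w)
  intro h
  have := congr_arg (coeff m) h
  rw [coeff_weightedHomogeneousComponent, weightedTotalDegree, hmax, if_pos rfl,
    coeff_zero] at this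
  exact (MvPolynomial.mem_support_iff.1 hm) this

/-- The degree forms of degree `d` of elements of `I`, together with `0`: the degree-`d` part
of `DF_W(I)` (see `weightedHomogeneousComponent_mem_leadingForms`). -/
noncomputable def leadingForms (w : σ → ℕ) (I : Ideal (MvPolynomial σ R)) (d : ℕ) :
    Submodule R (MvPolynomial σ R) :=
  (I.restrictScalars R ⊓ restrictSupport R {m | weight w m ≤ d}).map
    (weightedHomogeneousComponent w d)

variable {I : Ideal (MvPolynomial σ R)}

theorem mem_leadingForms {d : ℕ} {q : MvPolynomial σ R} :
    q ∈ leadingForms w I d ↔ ∃ f ∈ I, f ∈ restrictSupport R {m | weight w m ≤ d} ∧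
      weightedHomogeneousComponent w d f = q := by
  simp [leadingForms, and_assoc]

theorem monomial_mul_mem_leadingForms {d : ℕ} {q : MvPolynomial σ R}
    (hq : q ∈ leadingForms w I d) (m : σ →₀ ℕ) (c : R) :
    monomial m c * q ∈ leadingForms w I (weight w m + d) := by
  classical
  obtain ⟨f, hfI, hfd, rfl⟩ := mem_leadingForms.1 hq
  refine mem_leadingForms.2 ⟨monomial m c * f, I.mul_mem_left _ hfI, fun k hk => ?_, ?_⟩
  · obtain ⟨a, ha, b, hb, rfl⟩ := Finset.mem_add.1 (support_mul _ _ hk)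
    rw [Finset.mem_singleton.1 (support_monomial_subset ha), Set.mem_ofPred_eq, map_add]
    exact Nat.add_le_add_left (hfd hb) _
  · rw [weightedHomogeneousComponent_monomial_mul, if_pos le_self_add, add_tsub_cancel_left]

theorem weightedHomogeneousComponent_monomial_mul_mem_leadingForms {p : MvPolynomial σ R}
    (hp : ∀ e, weightedHomogeneousComponent w e p ∈ leadingForms w I e) (d : ℕ)
    (m : σ →₀ ℕ) (c : R) :
    weightedHomogeneousComponent w d (monomial m c * p) ∈ leadingForms w I d := by
  rw [weightedHomogeneousComponent_monomial_mul]
  split_ifs with hm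
  · simpa [add_tsub_cancel_of_le hm] using monomial_mul_mem_leadingForms (hp (d - weight w m)) m c
  · exact zero_mem _

end WeightedComponents

section DegreeForm

variable {K : Type*} [Field K] {n : ℕ} {w : Fin n → ℕ}

theorem degW_eq_weight : degW n w = weight w := by
  ext m
  simp [degW, weight_eq_sum, mul_comm]

theorem DF_eq_weightedHomogeneousComponent (f : MvPolynomial (Fin n) K) :
    DF K n w f = weightedHomogeneousComponent w (weightedTotalDegree w f) f := by
  rw [DF, weightedHomogeneousComponent_apply, degW_eq_weight, weightedTotalDegree]

theorem DF_ne_zero {f : MvPolynomial (Fin n) K} (hf : f ≠ 0) : DF K n w f ≠ 0 := by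
  rw [DF_eq_weightedHomogeneousComponent]
  exact weightedHomogeneousComponent_weightedTotalDegree_ne_zero hf

theorem support_DF_subset (f : MvPolynomial (Fin n) K) : (DF K n w f).support ⊆ f.support := by
  rw [DF_eq_weightedHomogeneousComponent]
  exact support_weightedHomogeneousComponent_subset _ _

variable {I : Ideal (MvPolynomial (Fin n) K)}

theorem weightedHomogeneousComponent_mem_leadingForms {p : MvPolynomial (Fin n) K}
    (hp : p ∈ DFideal K n w I) (d : ℕ) :
    weightedHomogeneousComponent w d p ∈ leadingForms w I d := by
  induction hp using Submodule.span_induction generalizing d with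
  | mem _ hq =>
    obtain ⟨f, hfI, -, rfl⟩ := hq
    rw [DF_eq_weightedHomogeneousComponent,
      weightedHomogeneousComponent_of_mem (weightedHomogeneousComponent_mem _ _ _)]
    split_ifs with hd
    · subst hd
      exact mem_leadingForms.2 ⟨f, hfI, fun m hm => le_weightedTotalDegree w hm, rfl⟩
    · exact zero_mem _
  | zero => simp
  | add _ _ _ _ hx hy => simpa using add_mem (hx d) (hy d)
  | smul r x _ hx =>
    rw [smul_eq_mul, r.as_sum, Finset.sum_mul, map_sum]
    exact sum_mem fun m _ => weightedHomogeneousComponent_monomial_mul_mem_leadingForms hx d m _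

end DegreeForm

section Complement

variable {K : Type*} [Field K] {n : ℕ} {w : Fin n → ℕ} {I : Ideal (MvPolynomial (Fin n) K)}
  {s : Set (Fin n →₀ ℕ)}

theorem not_support_DF_subset
    (hdisj : Disjoint ((DFideal K n w I).restrictScalars K) (restrictSupport K s))
    {f : MvPolynomial (Fin n) K} (hfI : f ∈ I) (hf : f ≠ 0) :
    ¬ ↑(DF K n w f).support ⊆ s := fun hsupp =>
  DF_ne_zero hf <| Submodule.disjoint_def.1 hdisj _
    (Ideal.subset_span ⟨f, hfI, hf, rfl⟩) hsupp

theorem disjoint_of_disjoint_DFideal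
    (hdisj : Disjoint ((DFideal K n w I).restrictScalars K) (restrictSupport K s)) :
    Disjoint (I.restrictScalars K) (restrictSupport K s) := by
  refine Submodule.disjoint_def.2 fun f hfI hfs => ?_
  by_contra hf
  exact not_support_DF_subset hdisj hfI hf ((Finset.coe_subset.2 (support_DF_subset f)).trans hfs)

/-- The top component of `f` is `p + v` with `p ∈ DF_W(I)`, `v ∈ ⟨s⟩`, and `p` agrees in that
degree with some `h ∈ I` of no larger degree, so `f - h - v` has smaller degree. -/
theorem restrictSupport_weight_lt_le_sup
    (hcompl : IsCompl ((DFideal K n w I).restrictScalars K) (restrictSupport K s)) (d : ℕ) :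
    restrictSupport K {m | weight w m < d} ≤ I.restrictScalars K ⊔ restrictSupport K s := by
  induction d with
  | zero =>
    intro f hf
    obtain rfl : f = 0 := support_eq_empty.1
      (Finset.eq_empty_of_forall_notMem fun m hm => Nat.not_lt_zero _ (hf hm))
    exact zero_mem _
  | succ d ih =>
    intro f hf
    have hfd : f ∈ restrictSupport K {m | weight w m ≤ d} := fun m hm => Nat.lt_succ_iff.1 (hf hm)
    obtain ⟨p, hp, v, hv, hpv⟩ := Submodule.mem_sup.1
      (hcompl.sup_eq_top ▸ Submodule.mem_top : weightedHomogeneousComponent w d f ∈ _)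
    obtain ⟨h, hhI, hhd, hh⟩ := mem_leadingForms.1 (weightedHomogeneousComponent_mem_leadingForms
      ((Submodule.restrictScalars_mem K _ _).1 hp) d)
    set v' := weightedHomogeneousComponent w d v
    have hv' : v' ∈ restrictSupport K s := (mem_restrictSupport_iff K).2
      ((Finset.coe_subset.2 (support_weightedHomogeneousComponent_subset d v)).trans hv)
    have hv'd : v' ∈ restrictSupport K {m | weight w m ≤ d} := (mem_restrictSupport_iff K).2
      fun m hm => (weightedHomogeneousComponent_isWeightedHomogeneous d v
        (MvPolynomial.mem_support_iff.1 hm)).le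
    have hcomp : weightedHomogeneousComponent w d (f - h - v') = 0 := by
      have hsame := fun q : MvPolynomial (Fin n) K => weightedHomogeneousComponent_eq_self
        (weightedHomogeneousComponent_isWeightedHomogeneous (w := w) d q)
      have hf' := congr_arg (weightedHomogeneousComponent w d) hpv
      rw [map_add, hsame] at hf'
      rw [map_sub, map_sub, hh, hsame, ← hf']
      abel
    have hrest : f - h - v' ∈ I.restrictScalars K ⊔ restrictSupport K s :=
      ih (mem_restrictSupport_lt_of_weightedHomogeneousComponent_eq_zero
        (sub_mem (sub_mem hfd hhd) hv'd) hcomp)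
    rw [show f = (f - h - v') + h + v' by ring]
    exact add_mem (add_mem hrest (Submodule.mem_sup_left hhI)) (Submodule.mem_sup_right hv')

theorem isCompl_of_isCompl_DFideal
    (hcompl : IsCompl ((DFideal K n w I).restrictScalars K) (restrictSupport K s)) :
    IsCompl (I.restrictScalars K) (restrictSupport K s) := by
  refine ⟨disjoint_of_disjoint_DFideal hcompl.disjoint, codisjoint_iff.2 (eq_top_iff.2 ?_)⟩
  intro f _
  exact restrictSupport_weight_lt_le_sup hcompl (weightedTotalDegree w f + 1)
    fun m hm => Nat.lt_succ_of_le (le_weightedTotalDegree w hm)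

theorem mem_support_DF_of_support_subset_insert
    (hdisj : Disjoint ((DFideal K n w I).restrictScalars K) (restrictSupport K s))
    {f : MvPolynomial (Fin n) K} (hfI : f ∈ I) {b : Fin n →₀ ℕ} (hb : b ∈ f.support)
    (hsupp : ↑f.support ⊆ insert b s) : b ∈ (DF K n w f).support := by
  obtain ⟨k, hk, hks⟩ := Set.not_subset.1
    (not_support_DF_subset hdisj hfI fun h => by simp [h] at hb)
  obtain rfl | hk' := hsupp (support_DF_subset f hk)
  · exact hk
  · exact absurd hk' hks

end Complement

section BorderPolynomial

variable {σ R : Type*} [CommRing R]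

theorem span_monomial_eq_restrictSupport (O : Finset (σ →₀ ℕ)) :
    Submodule.span R {p : MvPolynomial σ R | ∃ t ∈ O, p = monomial t 1} =
      restrictSupport R ↑O := by
  rw [restrictSupport_eq_span]
  congr 1
  ext p
  simp [eq_comm]

theorem eq_sum_C_mul_monomial_of_mem_restrictSupport {O : Finset (σ →₀ ℕ)}
    {p : MvPolynomial σ R} (hp : p ∈ restrictSupport R ↑O) :
    p = ∑ t ∈ O, C (coeff t p) * monomial t 1 := by
  simp only [C_mul_monomial, mul_one]
  conv_lhs => rw [p.as_sum]
  exact Finset.sum_subset (Finset.coe_subset.1 hp) fun t _ ht => by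
    rw [MvPolynomial.notMem_support_iff.1 ht, monomial_zero]

theorem exists_mem_eq_monomial_sub_sum [Nontrivial R] {I : Ideal (MvPolynomial σ R)}
    {O : Finset (σ →₀ ℕ)} (hI : IsCompl (I.restrictScalars R) (restrictSupport R ↑O))
    {b : σ →₀ ℕ} (hb : b ∉ O) :
    ∃ g ∈ I, (∃ c : (σ →₀ ℕ) → R, g = monomial b 1 - ∑ t ∈ O, C (c t) * monomial t 1) ∧
      b ∈ g.support ∧ ↑g.support ⊆ insert b (O : Set (σ →₀ ℕ)) := by
  classical
  obtain ⟨g, hgI, v, hv, hgv⟩ := Submodule.mem_sup.1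
    (hI.sup_eq_top ▸ Submodule.mem_top : monomial b (1 : R) ∈ _)
  obtain rfl : g = monomial b 1 - v := eq_sub_of_add_eq hgv
  have hvb : coeff b v = 0 := MvPolynomial.notMem_support_iff.1 fun h => hb (hv h)
  refine ⟨_, hgI, ⟨fun t => coeff t v, by rw [← eq_sum_C_mul_monomial_of_mem_restrictSupport hv]⟩,
    by simp [hvb], fun m hm => ?_⟩
  rcases Finset.mem_union.1 (support_sub σ _ _ hm) with hm | hm
  · exact Or.inl (Finset.mem_singleton.1 (support_monomial_subset hm))
  · exact Or.inr (hv hm)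

end BorderPolynomial

theorem notMem_of_mem_borderSet {n : ℕ} {O : Finset (Fin n →₀ ℕ)} {b : Fin n →₀ ℕ}
    (hb : b ∈ borderSet n O) : b ∉ O :=
  (Finset.mem_sdiff.1 hb).2

theorem borderBasis_of_degreeForm_borderBasis_general (K : Type*) [Field K] (n : ℕ)
    (w : Fin n → ℕ)
    (O : Finset (Fin n →₀ ℕ))
    (I : Ideal (MvPolynomial (Fin n) K))
    (hDF : ∃ h : (Fin n →₀ ℕ) → MvPolynomial (Fin n) K,
      IsBorderBasis K n O (DFideal K n w I) h) :
    ∃ g : (Fin n →₀ ℕ) → MvPolynomial (Fin n) K,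
      IsBorderBasis K n O I g ∧
      ∀ b ∈ borderSet n O, b ∈ (DF K n w (g b)).support := by
  obtain ⟨-, -, hDFcompl⟩ := hDF
  rw [span_monomial_eq_restrictSupport] at hDFcompl
  have hcompl := isCompl_of_isCompl_DFideal hDFcompl
  choose! g hgI hg_shape hg_mem hg_supp using fun b (hb : b ∈ borderSet n O) =>
    exists_mem_eq_monomial_sub_sum hcompl (notMem_of_mem_borderSet hb)
  refine ⟨g, ⟨fun b hb => ⟨hgI b hb, hg_shape b hb⟩, ?_⟩, fun b hb => ?_⟩
  · rwa [span_monomial_eq_restrictSupport]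
  · exact mem_support_DF_of_support_subset_insert hDFcompl.disjoint (hgI b hb) (hg_mem b hb)
      (hg_supp b hb)

/-- If the degree form ideal `DF_W(I)` of a zero-dimensional ideal `I` has an `O`-border basis,
then `I` has an `O`-border basis `G = {g_1,…,g_ν}` with `b_j ∈ Supp(DF_W(g_j))` for each `j`. -/
theorem borderBasis_of_degreeForm_borderBasis (K : Type*) [Field K] (n : ℕ)
    (w : Fin n → ℕ) (hw : ∀ i, 0 < w i)
    (O : Finset (Fin n →₀ ℕ)) (hO : ∀ t ∈ O, ∀ s : Fin n →₀ ℕ, s ≤ t → s ∈ O)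
    (I : Ideal (MvPolynomial (Fin n) K))
    (hfin : Module.Finite K (MvPolynomial (Fin n) K ⧸ I))
    (hDF : ∃ h : (Fin n →₀ ℕ) → MvPolynomial (Fin n) K,
      IsBorderBasis K n O (DFideal K n w I) h) :
    ∃ g : (Fin n →₀ ℕ) → MvPolynomial (Fin n) K,
      IsBorderBasis K n O I g ∧
      ∀ b ∈ borderSet n O, b ∈ (DF K n w (g b)).support :=
  borderBasis_of_degreeForm_borderBasis_general K n w O I hDF
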